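/- Let S be a finite state set and let 𝒯, 𝒯̂ : S × S → [0,1] be two transition systems (Markov kernels) on S with the same initial state distribution, and for i ≥ 1 let 𝒯ⁱ, 𝒯̂ⁱ denote the marginal state distributions at time i of the corresponding Markov chains. Define the average state distributions ρ_𝒯(s) = (1/n)·Σ_{i=1}^n 𝒯ⁱ(s) and ρ_𝒯̂(s) = (1/n)·Σ_{i=1}^n 𝒯̂ⁱ(s). If D_TV(𝒯(·∣s), 𝒯̂(·∣s)) ≤ α for every s ∈ S, then D_TV(ρ_𝒯, ρ_𝒯̂) ≤ α·(n+1)/2. -/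

import Mathlib

/-- Marginal state distribution at time `t` of the Markov chain with kernel `T`
(where `T s s'` is the probability of moving to `s'` from `s`) and initial
distribution `ι`. -/
noncomputable def marginal {S : Type*} [Fintype S] (T : S → S → ℝ) (ι : S → ℝ) :
    ℕ → S → ℝ
  | 0 => ι
  | t + 1 => fun s => ∑ sb, T sb s * marginal T ι t sb

/-- Total variation distance between two distributions on a finite set. -/
noncomputable def tvDist {S : Type*} [Fintype S] (p q : S → ℝ) : ℝ :=
  (1 / 2) * ∑ s, |p s - q s|

/-- The average state distribution over horizon `n`: the uniform mixture of the
marginals at times `1` through `n`. -/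
noncomputable def avgDist {S : Type*} [Fintype S] (T : S → S → ℝ) (ι : S → ℝ)
    (n : ℕ) : S → ℝ :=
  fun s => (1 / (n : ℝ)) * ∑ i ∈ Finset.range n, marginal T ι (i + 1) s

/-!
Write `p ↦ pT` for one step of a chain. This map is a contraction in total variation, and
replacing the kernel `T` by `T̂` moves a distribution `p` by at most `α`. By the triangle
inequality the marginals at time `t` of the two chains are therefore within `t·α`, and the
total variation of the averages is at most the average `(1/n)·Σ_{t=1}^n t·α = α·(n+1)/2`.
-/

open Finset

namespace MarkovChain

variable {S : Type*} [Fintype S]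

noncomputable def pushDist (T : S → S → ℝ) (p : S → ℝ) : S → ℝ :=
  fun s => ∑ sb, T sb s * p sb

theorem marginal_succ (T : S → S → ℝ) (ι : S → ℝ) (t : ℕ) :
    marginal T ι (t + 1) = pushDist T (marginal T ι t) :=
  rfl

theorem tvDist_self (p : S → ℝ) : tvDist p p = 0 := by
  simp [tvDist]

theorem tvDist_nonneg (p q : S → ℝ) : 0 ≤ tvDist p q := by
  unfold tvDist
  positivity

theorem tvDist_triangle (p q r : S → ℝ) : tvDist p r ≤ tvDist p q + tvDist q r := by
  unfold tvDist
  rw [← mul_add, ← sum_add_distrib]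
  gcongr with s
  exact abs_sub_le _ _ _

theorem pushDist_nonneg {T : S → S → ℝ} {p : S → ℝ} (hT : ∀ s s', 0 ≤ T s s')
    (hp : ∀ s, 0 ≤ p s) (s : S) : 0 ≤ pushDist T p s :=
  sum_nonneg fun sb _ => mul_nonneg (hT sb s) (hp sb)

theorem sum_pushDist {T : S → S → ℝ} (hT : ∀ s, ∑ s', T s s' = 1) (p : S → ℝ) :
    ∑ s, pushDist T p s = ∑ s, p s := by
  unfold pushDist
  rw [sum_comm]
  simp only [← sum_mul, hT, one_mul]

theorem tvDist_pushDist_le {T : S → S → ℝ} (hT0 : ∀ s s', 0 ≤ T s s')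
    (hT1 : ∀ s, ∑ s', T s s' = 1) (p q : S → ℝ) :
    tvDist (pushDist T p) (pushDist T q) ≤ tvDist p q := by
  unfold tvDist
  refine mul_le_mul_of_nonneg_left ?_ (by norm_num)
  calc ∑ s, |pushDist T p s - pushDist T q s|
      = ∑ s, |∑ sb, T sb s * (p sb - q sb)| := by
        simp only [pushDist, ← sum_sub_distrib, mul_sub]
    _ ≤ ∑ s, ∑ sb, T sb s * |p sb - q sb| := by
        gcongr with s
        refine (abs_sum_le_sum_abs _ _).trans_eq ?_
        simp only [abs_mul, abs_of_nonneg (hT0 _ s)]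
    _ = ∑ sb, |p sb - q sb| := sum_pushDist hT1 _

theorem tvDist_pushDist_pushDist_le {T T' : S → S → ℝ} {p : S → ℝ} (hp : ∀ s, 0 ≤ p s) :
    tvDist (pushDist T p) (pushDist T' p) ≤ ∑ sb, p sb * tvDist (T sb) (T' sb) := by
  unfold tvDist
  simp only [mul_left_comm _ (1 / 2 : ℝ), ← mul_sum]
  refine mul_le_mul_of_nonneg_left ?_ (by norm_num)
  calc ∑ s, |pushDist T p s - pushDist T' p s|
      = ∑ s, |∑ sb, p sb * (T sb s - T' sb s)| := by
        simp only [pushDist, ← sum_sub_distrib]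
        exact sum_congr rfl fun s _ => congrArg abs (sum_congr rfl fun sb _ => by ring)
    _ ≤ ∑ s, ∑ sb, p sb * |T sb s - T' sb s| := by
        gcongr with s
        refine (abs_sum_le_sum_abs _ _).trans_eq ?_
        simp only [abs_mul, abs_of_nonneg (hp _)]
    _ = ∑ sb, p sb * ∑ s, |T sb s - T' sb s| := by
        rw [sum_comm]
        simp only [mul_sum]

theorem marginal_nonneg {T : S → S → ℝ} {ι : S → ℝ} (hT : ∀ s s', 0 ≤ T s s')
    (hι : ∀ s, 0 ≤ ι s) : ∀ t s, 0 ≤ marginal T ι t s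
  | 0 => hι
  | t + 1 => pushDist_nonneg hT (marginal_nonneg hT hι t)

theorem sum_marginal {T : S → S → ℝ} {ι : S → ℝ} (hT : ∀ s, ∑ s', T s s' = 1)
    (hι : ∑ s, ι s = 1) : ∀ t, ∑ s, marginal T ι t s = 1
  | 0 => hι
  | t + 1 => (sum_pushDist hT _).trans (sum_marginal hT hι t)

theorem tvDist_marginal_le {T T' : S → S → ℝ} {ι : S → ℝ}
    (hT0 : ∀ s s', 0 ≤ T s s') (hT1 : ∀ s, ∑ s', T s s' = 1)
    (hT'0 : ∀ s s', 0 ≤ T' s s') (hT'1 : ∀ s, ∑ s', T' s s' = 1)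
    (hι0 : ∀ s, 0 ≤ ι s) (hι1 : ∑ s, ι s = 1)
    {α : ℝ} (hα : ∀ s, tvDist (T s) (T' s) ≤ α) :
    ∀ t : ℕ, tvDist (marginal T ι t) (marginal T' ι t) ≤ t * α
  | 0 => by rw [Nat.cast_zero, zero_mul]; exact (tvDist_self ι).le
  | t + 1 => by
    rw [marginal_succ, marginal_succ]
    set p := marginal T ι t
    set q := marginal T' ι t
    have hq0 : ∀ s, 0 ≤ q s := marginal_nonneg hT'0 hι0 t
    have hkernel : tvDist (pushDist T q) (pushDist T' q) ≤ α :=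
      calc tvDist (pushDist T q) (pushDist T' q)
          ≤ ∑ sb, q sb * tvDist (T sb) (T' sb) := tvDist_pushDist_pushDist_le hq0
        _ ≤ ∑ sb, q sb * α := by gcongr with sb; exacts [hq0 sb, hα sb]
        _ = α := by rw [← sum_mul, sum_marginal hT'1 hι1, one_mul]
    calc tvDist (pushDist T p) (pushDist T' q)
        ≤ tvDist (pushDist T p) (pushDist T q) + tvDist (pushDist T q) (pushDist T' q) :=
          tvDist_triangle _ _ _
      _ ≤ t * α + α := add_le_add
          ((tvDist_pushDist_le hT0 hT1 p q).trans (tvDist_marginal_le hT0 hT1 hT'0 hT'1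
            hι0 hι1 hα t)) hkernel
      _ = ((t + 1 : ℕ) : ℝ) * α := by push_cast; ring

theorem tvDist_smul_sum_le {κ : Type*} (I : Finset κ) {c : ℝ} (hc : 0 ≤ c)
    (p q : κ → S → ℝ) :
    tvDist (fun s => c * ∑ i ∈ I, p i s) (fun s => c * ∑ i ∈ I, q i s)
      ≤ c * ∑ i ∈ I, tvDist (p i) (q i) := by
  unfold tvDist
  simp only [← mul_sub, ← sum_sub_distrib, abs_mul, abs_of_nonneg hc, ← mul_sum]
  rw [mul_left_comm, sum_comm]
  gcongr with i
  exact abs_sum_le_sum_abs _ _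

end MarkovChain

open MarkovChain

theorem sum_range_natCast_add_one (n : ℕ) :
    ∑ i ∈ range n, ((i : ℝ) + 1) = n * (n + 1) / 2 := by
  induction n with
  | zero => simp
  | succ n ih => rw [sum_range_succ, ih]; push_cast; ring

/-- If the one-step kernels of two transition systems are
everywhere within total variation `α`, then the average state distributions over
horizon `n` of the chains started from a common initial distribution are within
total variation `α·(n+1)/2`. -/
theorem ambs_average_state_distribution_bound {S : Type*} [Fintype S]
    (T That : S → S → ℝ) (ι : S → ℝ)
    (hT0 : ∀ s s', 0 ≤ T s s') (hT1 : ∀ s, ∑ s', T s s' = 1)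
    (hThat0 : ∀ s s', 0 ≤ That s s') (hThat1 : ∀ s, ∑ s', That s s' = 1)
    (hι0 : ∀ s, 0 ≤ ι s) (hι1 : ∑ s, ι s = 1)
    (α : ℝ) (hα : ∀ s, tvDist (T s) (That s) ≤ α) (n : ℕ) :
    tvDist (avgDist T ι n) (avgDist That ι n) ≤ α * (n + 1) / 2 := by
  obtain ⟨s₀, -⟩ := nonempty_of_sum_ne_zero (hι1.trans_ne one_ne_zero)
  have hα0 : 0 ≤ α := (tvDist_nonneg _ _).trans (hα s₀)
  have hmarginal := tvDist_marginal_le hT0 hT1 hThat0 hThat1 hι0 hι1 hα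
  calc tvDist (avgDist T ι n) (avgDist That ι n)
      ≤ 1 / n * ∑ i ∈ range n, tvDist (marginal T ι (i + 1)) (marginal That ι (i + 1)) :=
        tvDist_smul_sum_le _ (by positivity) _ _
    _ ≤ 1 / n * ∑ i ∈ range n, ((i : ℝ) + 1) * α := by
        gcongr with i
        exact_mod_cast hmarginal (i + 1)
    -- `n / n` rather than `1`, since `1 / n = 0` when `n = 0`
    _ = α * (n + 1) / 2 * (n / n) := by
        rw [← sum_mul, sum_range_natCast_add_one]; ring
    _ ≤ α * (n + 1) / 2 := by
        exact mul_le_of_le_one_right (by positivity) (div_self_le_one _)
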